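/- arXiv:1905.09378 — 2 statements merged into one kernel-verified Lean document; each statement's English description precedes it below -/
import Mathlib

section
/- Let H be a finite group of order m acting on a finite set S, f : S → S an H-equivariant map, and set M = (card (S/H))! and N = M · m!. Then the natural map Per_N(S,f)/H → Per_N(S/H, f̄), sending the H-orbit of P to π(P), is a bijection. -/
/-!
A periodic point `Q` of `f̄` has minimal period at most `card (S/H)`, so `f̄^[M] Q = Q`.
For a lift `P` of `Q` this says `f^[M] P = h • P` for some `h ∈ H`, and equivariance gives
`f^[M * k] P = h ^ k • P`; taking `k = m!`, a multiple of the order of `h`, makes `P` an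
`N`-periodic point of `f`. Injectivity is the definition of the orbit relation.
-/

open Function MulAction
open scoped Nat

theorem pow_factorial_card_eq_one {G : Type*} [Group G] [Fintype G] (g : G) :
    g ^ (Fintype.card G)! = 1 :=
  orderOf_dvd_iff_pow_eq_one.mp (orderOf_dvd_card.trans (Nat.dvd_factorial Fintype.card_pos le_rfl))

section Equivariant

variable {H S : Type*} [Group H] [MulAction H S] {f : S → S}

theorem iterate_smul_of_smul_comm (hf : ∀ (h : H) (x : S), f (h • x) = h • f x)
    (n : ℕ) (h : H) (x : S) : f^[n] (h • x) = h • f^[n] x :=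
  (show Function.Commute f (h • ·) from hf h).iterate_left n x

theorem iterate_mul_eq_pow_smul (hf : ∀ (h : H) (x : S), f (h • x) = h • f x)
    {M : ℕ} {h : H} {x : S} (hx : f^[M] x = h • x) (k : ℕ) : f^[M * k] x = h ^ k • x := by
  induction k with
  | zero => simp
  | succ k ih => rw [Nat.mul_succ, iterate_add_apply, hx, iterate_smul_of_smul_comm hf, ih,
      smul_smul, ← pow_succ']

theorem isPeriodicPt_mul_factorial_card_of_mem_orbit [Fintype H]
    (hf : ∀ (h : H) (x : S), f (h • x) = h • f x) {M : ℕ} {x : S}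
    (hx : f^[M] x ∈ orbit H x) : IsPeriodicPt f (M * (Fintype.card H)!) x := by
  obtain ⟨h, hh⟩ := hx
  rw [IsPeriodicPt, IsFixedPt, iterate_mul_eq_pow_smul hf hh.symm, pow_factorial_card_eq_one,
    one_smul]

theorem exists_isPeriodicPt_lift [Fintype H] (hf : ∀ (h : H) (x : S), f (h • x) = h • f x)
    {fbar : Quotient (orbitRel H S) → Quotient (orbitRel H S)}
    (hsemi : Semiconj (Quotient.mk (orbitRel H S)) f fbar) {M : ℕ} {Q : Quotient (orbitRel H S)}
    (hQ : IsPeriodicPt fbar M Q) :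
    ∃ P : S, IsPeriodicPt f (M * (Fintype.card H)!) P ∧ Quotient.mk (orbitRel H S) P = Q := by
  have hlift : f^[M] Q.out ∈ orbit H Q.out :=
    orbitRel_apply.mp <| Quotient.exact <|
      (hsemi.iterate_right M Q.out).trans (by rw [Quotient.out_eq, hQ])
  exact ⟨Q.out, isPeriodicPt_mul_factorial_card_of_mem_orbit hf hlift, Q.out_eq⟩

end Equivariant

/-- With `M = (card (S/H))!` and `N = M * m!` (`m = |H|`), the natural map
`Per_N(S,f)/H → Per_N(S/H, f̄)` is a bijection: it is well-defined, injective
(periodic points with the same image lie in the same orbit), and surjective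
(every `N`-periodic point of `f̄` lifts to an `N`-periodic point of `f`). -/
theorem perN_quotient_map_bijective {H S : Type*} [Group H] [Fintype H] [Fintype S]
    [MulAction H S] (m : ℕ) (hm : Fintype.card H = m)
    (f : S → S) (hf : ∀ (h : H) (x : S), f (h • x) = h • f x)
    (fbar : Quotient (MulAction.orbitRel H S) → Quotient (MulAction.orbitRel H S))
    (hfbar : fbar ∘ Quotient.mk (MulAction.orbitRel H S) =
      Quotient.mk (MulAction.orbitRel H S) ∘ f)
    (M N : ℕ)
    (hM : M = Nat.factorial (Nat.card (Quotient (MulAction.orbitRel H S))))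
    (hN : N = M * Nat.factorial m) :
    (∀ P : S, f^[N] P = P →
        fbar^[N] (Quotient.mk (MulAction.orbitRel H S) P) =
          Quotient.mk (MulAction.orbitRel H S) P) ∧
    (∀ P P' : S, f^[N] P = P → f^[N] P' = P' →
        Quotient.mk (MulAction.orbitRel H S) P = Quotient.mk (MulAction.orbitRel H S) P' →
        ∃ h : H, h • P = P') ∧
    (∀ Q : Quotient (MulAction.orbitRel H S), fbar^[N] Q = Q →
        ∃ P : S, f^[N] P = P ∧ Quotient.mk (MulAction.orbitRel H S) P = Q) := by
  classical
  have hsemi : Semiconj (Quotient.mk (orbitRel H S)) f fbar := fun x => (congrFun hfbar x).symm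
  refine ⟨fun P hP => ?_, fun P P' _ _ hPP' => ?_, fun Q hQ => ?_⟩
  · rw [← hsemi.iterate_right N P, hP]
  · exact orbitRel_apply.mp (Quotient.exact hPP'.symm)
  · have hN_pos : 0 < N := hN ▸ Nat.mul_pos (hM ▸ Nat.factorial_pos _) (Nat.factorial_pos _)
    have hQM : IsPeriodicPt fbar M Q := by
      rw [hM, Nat.card_eq_fintype_card]
      exact isPeriodicPt_factorial_card_of_mem_periodicPts (mk_mem_periodicPts hN_pos hQ)
    subst hN hm
    exact exists_isPeriodicPt_lift hf hsemi hQM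
end

section
/- Let G be a finite group acting on a finite set S and f : S → S a G-equivariant map. For each subgroup H ≤ G let f_H denote the induced map on S/H and Per(S/H, f_H) its set of periodic points. If integers (n_H) satisfy that Σ_H n_H ε_H ∈ Q[G] is annihilated by every rational character of G, then Σ_{H ≤ G} n_H · |Per(S/H, f_H)| = 0. -/
open scoped Classical

/-!
The periodic points `P ⊆ S` of `f` form a `G`-stable subset, and since `S` is finite every
`f`-orbit eventually falls into `P`; hence the periodic points of `f_H` on `S/H` are exactly
the images of `P`, i.e. `Per(S/H, f_H) ≃ P/H`. By Burnside's lemma `|P/H|` is the trace of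
`ε_H` on the permutation representation `ℚ[P]`, so `Σ_H n_H |Per(S/H, f_H)|` is the character
of `ℚ[P]` evaluated at `Σ_H n_H ε_H`, which vanishes by hypothesis.
-/

open Function MulAction

namespace Function

variable {α β : Type*} {f : α → α}

theorem exists_iterate_mem_periodicPts [Finite α] (f : α → α) (x : α) :
    ∃ a, f^[a] x ∈ periodicPts f := by
  obtain ⟨a, b, hab, h⟩ := Finite.exists_ne_map_eq_of_infinite (fun n : ℕ => f^[n] x)
  wlog hlt : a < b generalizing a b
  · exact this b a hab.symm h.symm (by omega)
  refine ⟨a, mk_mem_periodicPts (n := b - a) (by omega) ?_⟩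
  change f^[b - a] (f^[a] x) = f^[a] x
  rw [← iterate_add_apply, Nat.sub_add_cancel hlt.le, h]

theorem iterate_mem_periodicPts {x : α} (hx : x ∈ periodicPts f) (n : ℕ) :
    f^[n] x ∈ periodicPts f :=
  (bijOn_periodicPts f).mapsTo.iterate n hx

theorem Semiconj.image_periodicPts [Finite α] {fb : β → β} {π : α → β} (h : Semiconj π f fb)
    (hπ : Surjective π) : π '' periodicPts f = periodicPts fb := by
  refine h.mapsTo_periodicPts.image_subset.antisymm ?_
  rintro y ⟨k, hk, hy⟩
  obtain ⟨x, rfl⟩ := hπ y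
  obtain ⟨a, ha⟩ := exists_iterate_mem_periodicPts f x
  -- `f^[a] x` is periodic, and so is `f^[k * a] x`, which still lies over the `k`-periodic `π x`
  refine ⟨f^[k * a] x, ?_, ?_⟩
  · rw [← Nat.sub_add_cancel (Nat.le_mul_of_pos_left a hk), iterate_add_apply]
    exact iterate_mem_periodicPts ha _
  · rw [(h.iterate_right (k * a)).eq]
    exact hy.mul_const a

end Function

def SubMulAction.periodicPts (M : Type*) {α : Type*} [Monoid M] [MulAction M α] (f : α → α)
    (hf : ∀ (m : M) (x : α), f (m • x) = m • f x) : SubMulAction M α where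
  carrier := Function.periodicPts f
  smul_mem' m _ hx := Semiconj.mapsTo_periodicPts (fun x => (hf m x).symm) hx

@[simp]
theorem SubMulAction.coe_periodicPts (M : Type*) {α : Type*} [Monoid M] [MulAction M α]
    (f : α → α) (hf : ∀ (m : M) (x : α), f (m • x) = m • f x) :
    (SubMulAction.periodicPts M f hf : Set α) = Function.periodicPts f :=
  rfl

namespace MulAction

variable {G α : Type*} [Group G] [MulAction G α]

theorem orbitRel_subMulAction_eq_comap (H : Subgroup G) (P : SubMulAction G α) :
    orbitRel H P = (orbitRel H α).comap Subtype.val := by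
  ext x y
  simp only [Setoid.comap_rel, orbitRel_apply, mem_orbit_iff, Subtype.ext_iff, Subgroup.smul_def,
    SubMulAction.val_smul]

theorem card_orbitRel_quotient_subMulAction (H : Subgroup G) (P : SubMulAction G α) :
    Nat.card (orbitRel.Quotient H P) = Nat.card (Quotient.mk (orbitRel H α) '' P) := by
  rw [orbitRel.Quotient, orbitRel_subMulAction_eq_comap,
    Nat.card_congr (Setoid.comapQuotientEquiv _ _), Set.range_comp, Subtype.range_coe]

end MulAction

namespace Representation

variable {k G X : Type*} [Group G] [MulAction G X] [Finite X]

theorem trace_ofMulAction [CommRing k] (g : G) :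
    LinearMap.trace k (MonoidAlgebra k X) (ofMulAction k G X g) = Nat.card (fixedBy X g) := by
  cases nonempty_fintype X
  have hdiag : ∀ x : X, LinearMap.toMatrix (MonoidAlgebra.basis X k) (MonoidAlgebra.basis X k)
      (ofMulAction k G X g) x x = if g • x = x then 1 else 0 := by
    intro x
    simp only [LinearMap.toMatrix_apply, MonoidAlgebra.basis_apply, ofMulAction_single]
    exact Finsupp.single_apply (M := k)
  rw [LinearMap.trace_eq_matrix_trace k (MonoidAlgebra.basis X k), Matrix.trace]
  simp only [Matrix.diag_apply, hdiag, Finset.sum_boole, Nat.card_eq_fintype_card,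
    Fintype.card_subtype]
  rfl

variable (k) in
noncomputable def averagingIdempotent [DivisionRing k] (H : Subgroup G) [Fintype H] :
    MonoidAlgebra k G :=
  (Nat.card H : k)⁻¹ • ∑ h : H, MonoidAlgebra.of k G h

theorem trace_ofMulAction_averagingIdempotent [Field k] [CharZero k] (H : Subgroup G)
    [Fintype H] :
    LinearMap.trace k (MonoidAlgebra k X)
        ((ofMulAction k G X).asAlgebraHom (averagingIdempotent k H)) =
      Nat.card (orbitRel.Quotient H X) := by
  cases nonempty_fintype X
  have burnside : ∑ h : H, Nat.card (fixedBy X (h : G)) =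
      Nat.card (orbitRel.Quotient H X) * Nat.card H := by
    have := sum_card_fixedBy_eq_card_orbits_mul_card_group H X
    simp only [← Nat.card_eq_fintype_card] at this
    exact this
  have hH : (Nat.card H : k) ≠ 0 := Nat.cast_ne_zero.2 Nat.card_pos.ne'
  simp only [averagingIdempotent, map_smul, map_sum, asAlgebraHom_of, trace_ofMulAction]
  rw [← Nat.cast_sum, burnside, Nat.cast_mul, smul_eq_mul, inv_mul_eq_iff_eq_mul₀ hH, mul_comm]

end Representation

/-- Walton's idempotent relation for periodic points (Theorem B, for finite
`G`-sets): if `Σ_H n_H ε_H ∈ ℚ[G]` is annihilated by every rational character of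
`G`, then `Σ_H n_H |Per(S/H, f_H)| = 0`, where `f_H` is the map induced by the
`G`-equivariant map `f` on the quotient `S/H`. -/
theorem walton_periodic_point_count {G S : Type} [Group G] [Fintype G]
    [Fintype S] [MulAction G S]
    (f : S → S) (hf : ∀ (g : G) (x : S), f (g • x) = g • f x)
    (fbar : ∀ H : Subgroup G,
      Quotient (MulAction.orbitRel H S) → Quotient (MulAction.orbitRel H S))
    (hfbar : ∀ H : Subgroup G, fbar H ∘ Quotient.mk (MulAction.orbitRel H S) =
      Quotient.mk (MulAction.orbitRel H S) ∘ f)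
    (n : Subgroup G → ℤ) (u : MonoidAlgebra ℚ G)
    (hu : u = ∑ H : Subgroup G,
        (n H : ℚ) • ((Nat.card H : ℚ)⁻¹ • ∑ h : H, MonoidAlgebra.of ℚ G (h : G)))
    (hann : ∀ (V : Type) [AddCommGroup V] [Module ℚ V] [FiniteDimensional ℚ V]
        (ρ : Representation ℚ G V), LinearMap.trace ℚ V (ρ.asAlgebraHom u) = 0) :
    ∑ H : Subgroup G, n H *
        (Nat.card {Q : Quotient (MulAction.orbitRel H S) //
          ∃ k ≥ 1, (fbar H)^[k] Q = Q} : ℤ) = 0 := by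
  set P := SubMulAction.periodicPts G f hf
  have hper : ∀ H : Subgroup G, Nat.card {Q : Quotient (MulAction.orbitRel H S) //
      ∃ k ≥ 1, (fbar H)^[k] Q = Q} = Nat.card (orbitRel.Quotient H P) := by
    intro H
    have hsemiconj : Semiconj (Quotient.mk _) f (fbar H) := fun x => (congrFun (hfbar H) x).symm
    rw [card_orbitRel_quotient_subMulAction, SubMulAction.coe_periodicPts,
      hsemiconj.image_periodicPts Quotient.mk_surjective]
    rfl
  have hu' : u = ∑ H, (n H : ℚ) • Representation.averagingIdempotent ℚ H := hu
  have htrace := hann _ (Representation.ofMulAction ℚ G P)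
  simp only [hu', map_sum, map_smul, Representation.trace_ofMulAction_averagingIdempotent,
    ← hper, smul_eq_mul] at htrace
  exact_mod_cast htrace
end
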